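/- Let (X₁, F₁, μ₁), (X₂, F₂, μ₂), (Y₁, G₁, ν₁), (Y₂, G₂, ν₂) be σ-finite measure spaces, X := X₁ × X₂ with μ := μ₁ ⊗ μ₂, Y := Y₁ × Y₂ with ν := ν₁ ⊗ ν₂. Let m : X × Y → (0,∞) be measurable, let A be a solid Banach function space on Y and B a solid Banach function space on X, and let v : X → (0,∞), w : Y → (0,∞) be measurable with m(x,y) ≤ C · v(x) · w(y) for all (x,y) ∈ X × Y and some C > 0. If A ≠ {0} and every K ∈ 𝓑_m(X,Y) induces a well-defined operator Φ_K : A → B (i.e., for every f ∈ A the integral defining Φ_K f converges absolutely μ-a.e. and Φ_K f ∈ B), then 𝒢_v(μ) := (L¹(μ) ∩ L^∞(μ) ∩ L^{1,∞}(μ) ∩ L^{∞,1}(μ))_v embeds continuously into B: 𝒢_v(μ) ⊆ B and there is C' > 0 with ‖f‖_B ≤ C' ‖f‖_{𝒢_v(μ)} for all f ∈ 𝒢_v(μ). -/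

import Mathlib

open MeasureTheory ENNReal Filter

noncomputable section

/-- `L^p` norm (in `[0,∞]`) of an `ℝ≥0∞`-valued function. -/
def lpNormENN {α : Type*} [MeasurableSpace α] (μ : Measure α) (p : ℝ≥0∞)
    (f : α → ℝ≥0∞) : ℝ≥0∞ :=
  if p = ∞ then essSup f μ else (∫⁻ a, f a ^ p.toReal ∂μ) ^ (1 / p.toReal)

/-- Mixed `L^{p,q}` norm of an `ℝ≥0∞`-valued function on a product space. -/
def mixedNormENN {α β : Type*} [MeasurableSpace α] [MeasurableSpace β]
    (μ₁ : Measure α) (μ₂ : Measure β) (p q : ℝ≥0∞) (f : α × β → ℝ≥0∞) : ℝ≥0∞ :=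
  lpNormENN μ₂ q fun x₂ => lpNormENN μ₁ p fun x₁ => f (x₁, x₂)

/-- Mixed `L^{p,q}` norm of a complex-valued function on a product space. -/
def mixedNorm {α β : Type*} [MeasurableSpace α] [MeasurableSpace β]
    (μ₁ : Measure α) (μ₂ : Measure β) (p q : ℝ≥0∞) (f : α × β → ℂ) : ℝ≥0∞ :=
  mixedNormENN μ₁ μ₂ p q fun x => (‖f x‖₊ : ℝ≥0∞)

/-- The Schur constant `C₁(K)`. -/
def schurC1 {X Y : Type*} [MeasurableSpace X] [MeasurableSpace Y]
    (μ : Measure X) (ν : Measure Y) (K : X × Y → ℝ≥0∞) : ℝ≥0∞ :=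
  essSup (fun x => ∫⁻ y, K (x, y) ∂ν) μ

/-- The Schur constant `C₂(K)`. -/
def schurC2 {X Y : Type*} [MeasurableSpace X] [MeasurableSpace Y]
    (μ : Measure X) (ν : Measure Y) (K : X × Y → ℝ≥0∞) : ℝ≥0∞ :=
  essSup (fun y => ∫⁻ x, K (x, y) ∂μ) ν

/-- The Schur constant `C₃(K)`. -/
def schurC3 {X₁ X₂ Y₁ Y₂ : Type*} [MeasurableSpace X₁] [MeasurableSpace X₂]
    [MeasurableSpace Y₁] [MeasurableSpace Y₂]
    (μ₁ : Measure X₁) (μ₂ : Measure X₂) (ν₁ : Measure Y₁) (ν₂ : Measure Y₂)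
    (K : (X₁ × X₂) × (Y₁ × Y₂) → ℝ≥0∞) : ℝ≥0∞ :=
  essSup (fun x₂ =>
    ∫⁻ y₂, essSup (fun y₁ => ∫⁻ x₁, K ((x₁, x₂), (y₁, y₂)) ∂μ₁) ν₁ ∂ν₂) μ₂

/-- The Schur constant `C₄(K)`. -/
def schurC4 {X₁ X₂ Y₁ Y₂ : Type*} [MeasurableSpace X₁] [MeasurableSpace X₂]
    [MeasurableSpace Y₁] [MeasurableSpace Y₂]
    (μ₁ : Measure X₁) (μ₂ : Measure X₂) (ν₁ : Measure Y₁) (ν₂ : Measure Y₂)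
    (K : (X₁ × X₂) × (Y₁ × Y₂) → ℝ≥0∞) : ℝ≥0∞ :=
  essSup (fun y₂ =>
    ∫⁻ x₂, essSup (fun x₁ => ∫⁻ y₁, K ((x₁, x₂), (y₁, y₂)) ∂ν₁) μ₁ ∂μ₂) ν₂

/-- The kernel norm `‖K‖_{𝒜(U,V)}`. -/
def normA {U V : Type*} [MeasurableSpace U] [MeasurableSpace V]
    (lam : Measure U) (kap : Measure V) (K : U × V → ℝ≥0∞) : ℝ≥0∞ :=
  max (essSup (fun u => ∫⁻ v, K (u, v) ∂kap) lam)
      (essSup (fun v => ∫⁻ u, K (u, v) ∂lam) kap)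

/-- The kernel norm `‖K‖_{𝓑(X,Y)}` for an `ℝ≥0∞`-valued kernel. -/
def normB {X₁ X₂ Y₁ Y₂ : Type*} [MeasurableSpace X₁] [MeasurableSpace X₂]
    [MeasurableSpace Y₁] [MeasurableSpace Y₂]
    (μ₁ : Measure X₁) (μ₂ : Measure X₂) (ν₁ : Measure Y₁) (ν₂ : Measure Y₂)
    (K : (X₁ × X₂) × (Y₁ × Y₂) → ℝ≥0∞) : ℝ≥0∞ :=
  normA μ₂ ν₂ fun s => normA μ₁ ν₁ fun t => K ((t.1, s.1), (t.2, s.2))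

/-- The weighted kernel norm `‖K‖_{𝓑_m(X,Y)}` for an `ℝ≥0∞`-valued kernel. -/
def normBmENN {X₁ X₂ Y₁ Y₂ : Type*} [MeasurableSpace X₁] [MeasurableSpace X₂]
    [MeasurableSpace Y₁] [MeasurableSpace Y₂]
    (μ₁ : Measure X₁) (μ₂ : Measure X₂) (ν₁ : Measure Y₁) (ν₂ : Measure Y₂)
    (m : (X₁ × X₂) × (Y₁ × Y₂) → ℝ) (K : (X₁ × X₂) × (Y₁ × Y₂) → ℝ≥0∞) : ℝ≥0∞ :=
  normB μ₁ μ₂ ν₁ ν₂ fun z => ENNReal.ofReal (m z) * K z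

/-- The weighted kernel norm `‖K‖_{𝓑_m(X,Y)}` for a complex-valued kernel. -/
def normBm {X₁ X₂ Y₁ Y₂ : Type*} [MeasurableSpace X₁] [MeasurableSpace X₂]
    [MeasurableSpace Y₁] [MeasurableSpace Y₂]
    (μ₁ : Measure X₁) (μ₂ : Measure X₂) (ν₁ : Measure Y₁) (ν₂ : Measure Y₂)
    (m : (X₁ × X₂) × (Y₁ × Y₂) → ℝ) (K : (X₁ × X₂) × (Y₁ × Y₂) → ℂ) : ℝ≥0∞ :=
  normBmENN μ₁ μ₂ ν₁ ν₂ m fun z => (‖K z‖₊ : ℝ≥0∞)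

/-- The norm of the space `𝒢 = L¹ ∩ L^∞ ∩ L^{1,∞} ∩ L^{∞,1}`. -/
def Gnorm {α β : Type*} [MeasurableSpace α] [MeasurableSpace β]
    (μ₁ : Measure α) (μ₂ : Measure β) (f : α × β → ℂ) : ℝ≥0∞ :=
  max (max (eLpNorm f 1 (μ₁.prod μ₂)) (eLpNorm f ∞ (μ₁.prod μ₂)))
      (max (mixedNorm μ₁ μ₂ 1 ∞ f) (mixedNorm μ₁ μ₂ ∞ 1 f))

/-- The norm of the sum space `𝓗 = L¹ + L^∞ + L^{1,∞} + L^{∞,1}`. -/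
def Hnorm {α β : Type*} [MeasurableSpace α] [MeasurableSpace β]
    (μ₁ : Measure α) (μ₂ : Measure β) (f : α × β → ℂ) : ℝ≥0∞ :=
  ⨅ (g : (α × β → ℂ) × (α × β → ℂ) × (α × β → ℂ) × (α × β → ℂ))
    (_ : Measurable g.1 ∧ Measurable g.2.1 ∧ Measurable g.2.2.1 ∧ Measurable g.2.2.2 ∧
      f = g.1 + g.2.1 + g.2.2.1 + g.2.2.2),
    eLpNorm g.1 1 (μ₁.prod μ₂) + eLpNorm g.2.1 ∞ (μ₁.prod μ₂) +
      mixedNorm μ₁ μ₂ 1 ∞ g.2.2.1 + mixedNorm μ₁ μ₂ ∞ 1 g.2.2.2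

/-- The functional `ρ(f) = inf { ‖g‖_∞ + ‖h‖_1 : f = g + h }`. -/
def rho {α : Type*} [MeasurableSpace α] (μ : Measure α) (f : α → ℝ≥0∞) : ℝ≥0∞ :=
  ⨅ (gh : (α → ℝ≥0∞) × (α → ℝ≥0∞))
    (_ : Measurable gh.1 ∧ Measurable gh.2 ∧ f = gh.1 + gh.2),
    essSup gh.1 μ + ∫⁻ x, gh.2 x ∂μ


/-- A solid Banach function space on a measure space: a complete normed vector space of
(equivalence classes of a.e.-equal) measurable complex-valued functions such that
membership and norm only depend on the a.e.-magnitude of the function. -/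
structure SolidBanachFunctionSpace (α : Type*) [MeasurableSpace α] (μ : Measure α) where
  Mem : (α → ℂ) → Prop
  norm : (α → ℂ) → ℝ
  mem_measurable : ∀ f, Mem f → Measurable f
  mem_congr : ∀ f g, Mem f → Measurable g → f =ᵐ[μ] g → Mem g
  norm_congr : ∀ f g, Mem f → Mem g → f =ᵐ[μ] g → norm f = norm g
  zero_mem : Mem 0
  add_mem : ∀ f g, Mem f → Mem g → Mem (f + g)
  smul_mem : ∀ (c : ℂ) (f), Mem f → Mem (c • f)
  norm_nonneg' : ∀ f, Mem f → 0 ≤ norm f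
  norm_eq_zero_iff : ∀ f, Mem f → (norm f = 0 ↔ f =ᵐ[μ] 0)
  norm_add_le : ∀ f g, Mem f → Mem g → norm (f + g) ≤ norm f + norm g
  norm_smul' : ∀ (c : ℂ) (f), Mem f → norm (c • f) = ‖c‖ * norm f
  solid : ∀ f g, Mem f → Measurable g → (∀ᵐ x ∂μ, ‖g x‖ ≤ ‖f x‖) →
    Mem g ∧ norm g ≤ norm f
  complete : ∀ F : ℕ → α → ℂ, (∀ n, Mem (F n)) →
    (∀ ε : ℝ, 0 < ε → ∃ N : ℕ, ∀ m n, N ≤ m → N ≤ n → norm (F m - F n) < ε) →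
    ∃ f, Mem f ∧ Tendsto (fun n => norm (F n - f)) atTop (nhds 0)

/-!
Fix a nonzero `g ∈ A`, truncated so that `g ∈ L²` and `w g ∈ 𝒢(ν)`, and normalise
`k = c · conj g` so that `∫ k g = 1`. For `v f ∈ 𝒢(μ)` the rank-one kernel `K (x, y) = f x · k y`
satisfies `m |K| ≤ C (v |f|) ⊗ (w |k|)`, and the `𝓑`-norm of a tensor product is bounded by the
product of the `𝒢`-norms of its factors; hence `f = Φ_K g ∈ B`.

Continuity of the inclusion needs no closed graph theorem: if it failed, there would be `h k` with
`‖h k‖_B = k + 1` and `‖v · h k‖_𝒢 ≤ 2⁻ᵏ`, all dominated by the single function `∑ₖ |h k|`, which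
lies in `𝒢_v ⊆ B`; solidity of `B` then bounds `k + 1` uniformly.
-/

theorem Complex.enorm_ofReal_of_nonneg {r : ℝ} (hr : 0 ≤ r) : ‖(r : ℂ)‖ₑ = ENNReal.ofReal r := by
  rw [← ofReal_norm, Complex.norm_real, Real.norm_of_nonneg hr]

section EssSup

variable {α β : Type*} [MeasurableSpace α] [MeasurableSpace β]

theorem ENNReal.essSup_eq_iInf_rat (μ : Measure α) (f : α → ℝ≥0∞) :
    essSup f μ = ⨅ q : ℚ, if μ {x | (Real.toNNReal q : ℝ≥0∞) < f x} = 0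
      then (Real.toNNReal q : ℝ≥0∞) else ∞ := by
  have ae_le_iff : ∀ a : ℝ≥0∞, (∀ᵐ x ∂μ, f x ≤ a) ↔ μ {x | a < f x} = 0 := by
    intro a; simp only [ae_iff, not_le]
  refine le_antisymm (le_iInf fun q => ?_) (le_of_not_gt fun hlt => ?_)
  · split_ifs with h
    · exact essSup_le_of_ae_le _ ((ae_le_iff _).2 h)
    · exact le_top
  · obtain ⟨q, -, hq_gt, hq_lt⟩ := ENNReal.lt_iff_exists_rat_btwn.1 hlt
    have hq : μ {x | (Real.toNNReal q : ℝ≥0∞) < f x} = 0 :=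
      (ae_le_iff _).1 ((ENNReal.ae_le_essSup f).mono fun x hx => hx.trans hq_gt.le)
    refine (iInf_le_of_le q ?_).not_gt hq_lt
    rw [if_pos hq]

theorem Measurable.essSup_prod_left (μ : Measure α) [SFinite μ] {F : α × β → ℝ≥0∞}
    (hF : Measurable F) : Measurable fun b => essSup (fun a => F (a, b)) μ := by
  simp_rw [ENNReal.essSup_eq_iInf_rat]
  refine Measurable.iInf fun q => Measurable.ite ?_ measurable_const measurable_const
  exact measurable_measure_prodMk_right (measurableSet_lt measurable_const hF)
    (measurableSet_singleton 0)

theorem ENNReal.essSup_tsum_le (μ : Measure α) (f : ℕ → α → ℝ≥0∞) :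
    essSup (fun a => ∑' n, f n a) μ ≤ ∑' n, essSup (f n) μ := by
  refine essSup_le_of_ae_le _ ?_
  filter_upwards [ae_all_iff.2 fun n => ENNReal.ae_le_essSup (f n)] with a ha
  exact ENNReal.tsum_le_tsum ha

theorem ENNReal.essSup_essSup_le_essSup_prod (μ₁ : Measure α) (μ₂ : Measure β)
    [SFinite μ₁] [SFinite μ₂] {F : α × β → ℝ≥0∞} (hF : Measurable F) :
    essSup (fun b => essSup (fun a => F (a, b)) μ₁) μ₂ ≤ essSup F (μ₁.prod μ₂) := by
  have hset : MeasurableSet {z : α × β | F z ≤ essSup F (μ₁.prod μ₂)} :=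
    measurableSet_le hF measurable_const
  have h := (Measure.ae_ae_comm hset).1
    ((Measure.ae_prod_iff_ae_ae hset).1 (ENNReal.ae_le_essSup F))
  exact essSup_le_of_ae_le _ (h.mono fun b hb => essSup_le_of_ae_le _ hb)

end EssSup

structure IsFunctionNorm {α : Type*} [MeasurableSpace α] (μ : Measure α)
    (N : (α → ℝ≥0∞) → ℝ≥0∞) : Prop where
  mono : ∀ ⦃F G : α → ℝ≥0∞⦄, (∀ x, F x ≤ G x) → N F ≤ N G
  const_mul_le : ∀ (c : ℝ≥0∞) (F : α → ℝ≥0∞), c ≠ ∞ → N (fun x => c * F x) ≤ c * N F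
  tsum_le : ∀ F : ℕ → α → ℝ≥0∞, (∀ n, Measurable (F n)) →
    N (fun x => ∑' n, F n x) ≤ ∑' n, N (F n)
  ae_lt_top : ∀ F : α → ℝ≥0∞, Measurable F → N F < ∞ → ∀ᵐ x ∂μ, F x < ∞

section GnormENN

variable {α β : Type*} [MeasurableSpace α] [MeasurableSpace β] (μ₁ : Measure α) (μ₂ : Measure β)

def GnormENN (F : α × β → ℝ≥0∞) : ℝ≥0∞ :=
  max (max (∫⁻ z, F z ∂(μ₁.prod μ₂)) (essSup F (μ₁.prod μ₂)))
      (max (essSup (fun b => ∫⁻ a, F (a, b) ∂μ₁) μ₂) (∫⁻ b, essSup (fun a => F (a, b)) μ₁ ∂μ₂))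

variable {μ₁ μ₂}

theorem lintegral_le_gnormENN (F : α × β → ℝ≥0∞) :
    ∫⁻ z, F z ∂(μ₁.prod μ₂) ≤ GnormENN μ₁ μ₂ F :=
  (le_max_left _ _).trans (le_max_left _ _)

theorem essSup_le_gnormENN (F : α × β → ℝ≥0∞) :
    essSup F (μ₁.prod μ₂) ≤ GnormENN μ₁ μ₂ F :=
  (le_max_right _ _).trans (le_max_left _ _)

theorem essSup_lintegral_le_gnormENN (F : α × β → ℝ≥0∞) :
    essSup (fun b => ∫⁻ a, F (a, b) ∂μ₁) μ₂ ≤ GnormENN μ₁ μ₂ F :=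
  (le_max_left _ _).trans (le_max_right _ _)

theorem lintegral_essSup_le_gnormENN (F : α × β → ℝ≥0∞) :
    ∫⁻ b, essSup (fun a => F (a, b)) μ₁ ∂μ₂ ≤ GnormENN μ₁ μ₂ F :=
  (le_max_right _ _).trans (le_max_right _ _)

theorem lintegral_lintegral_le_gnormENN [SFinite μ₁] [SFinite μ₂] {F : α × β → ℝ≥0∞}
    (hF : Measurable F) : ∫⁻ b, ∫⁻ a, F (a, b) ∂μ₁ ∂μ₂ ≤ GnormENN μ₁ μ₂ F :=
  (lintegral_prod_symm F hF.aemeasurable).symm.le.trans (lintegral_le_gnormENN F)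

theorem essSup_essSup_le_gnormENN [SFinite μ₁] [SFinite μ₂] {F : α × β → ℝ≥0∞}
    (hF : Measurable F) :
    essSup (fun b => essSup (fun a => F (a, b)) μ₁) μ₂ ≤ GnormENN μ₁ μ₂ F :=
  (ENNReal.essSup_essSup_le_essSup_prod μ₁ μ₂ hF).trans (essSup_le_gnormENN F)

theorem gnorm_eq_gnormENN (f : α × β → ℂ) :
    Gnorm μ₁ μ₂ f = GnormENN μ₁ μ₂ fun z => ‖f z‖ₑ := by
  simp only [Gnorm, GnormENN, mixedNorm, mixedNormENN, lpNormENN, if_pos, if_neg one_ne_top,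
    toReal_one, div_one, rpow_one, eLpNorm_one_eq_lintegral_enorm, eLpNorm_exponent_top,
    eLpNormEssSup]
  rfl

theorem gnorm_ofReal_mul {v : α × β → ℝ} (hv : ∀ x, 0 ≤ v x) (f : α × β → ℂ) :
    Gnorm μ₁ μ₂ (fun x => (v x : ℂ) * f x)
      = GnormENN μ₁ μ₂ fun x => ENNReal.ofReal (v x) * ‖f x‖ₑ := by
  rw [gnorm_eq_gnormENN]
  congr 1 with x
  rw [enorm_mul, Complex.enorm_ofReal_of_nonneg (hv x)]

theorem gnormENN_mono {F G : α × β → ℝ≥0∞} (h : ∀ z, F z ≤ G z) :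
    GnormENN μ₁ μ₂ F ≤ GnormENN μ₁ μ₂ G :=
  max_le_max (max_le_max (lintegral_mono h) (essSup_mono_ae (.of_forall h)))
    (max_le_max (essSup_mono_ae (.of_forall fun b => lintegral_mono fun a => h (a, b)))
      (lintegral_mono fun b => essSup_mono_ae (.of_forall fun a => h (a, b))))

theorem gnormENN_const_mul_le (F : α × β → ℝ≥0∞) {c : ℝ≥0∞} (hc : c ≠ ∞) :
    GnormENN μ₁ μ₂ (fun z => c * F z) ≤ c * GnormENN μ₁ μ₂ F := by
  simp only [GnormENN, lintegral_const_mul' c _ hc, ENNReal.essSup_const_mul, ← mul_max]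
  rfl

theorem gnormENN_tsum_le [SFinite μ₁] {F : ℕ → α × β → ℝ≥0∞} (hF : ∀ n, Measurable (F n)) :
    GnormENN μ₁ μ₂ (fun z => ∑' n, F n z) ≤ ∑' n, GnormENN μ₁ μ₂ (F n) := by
  have hsec : ∀ n b, Measurable fun a => F n (a, b) := fun n b =>
    (hF n).comp measurable_prodMk_right
  refine max_le (max_le ?_ ?_) (max_le ?_ ?_)
  · rw [lintegral_tsum fun n => (hF n).aemeasurable]
    exact ENNReal.tsum_le_tsum fun n => lintegral_le_gnormENN (F n)
  · exact (ENNReal.essSup_tsum_le _ _).trans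
      (ENNReal.tsum_le_tsum fun n => essSup_le_gnormENN (F n))
  · simp_rw [lintegral_tsum fun n => (hsec n _).aemeasurable]
    exact (ENNReal.essSup_tsum_le _ _).trans
      (ENNReal.tsum_le_tsum fun n => essSup_lintegral_le_gnormENN (F n))
  · refine (lintegral_mono fun b => ENNReal.essSup_tsum_le _ _).trans ?_
    rw [lintegral_tsum fun n => ((hF n).essSup_prod_left μ₁).aemeasurable]
    exact ENNReal.tsum_le_tsum fun n => lintegral_essSup_le_gnormENN (F n)

theorem ae_lt_top_of_gnormENN_lt_top {F : α × β → ℝ≥0∞} (hF : Measurable F)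
    (hFG : GnormENN μ₁ μ₂ F < ∞) : ∀ᵐ z ∂(μ₁.prod μ₂), F z < ∞ :=
  ae_lt_top hF ((lintegral_le_gnormENN F).trans_lt hFG).ne

theorem gnormENN_indicator_prod_lt_top [SFinite μ₂] {E₁ : Set α} {E₂ : Set β}
    (hE₁ : MeasurableSet E₁) (hE₂ : MeasurableSet E₂) (hE₁_lt : μ₁ E₁ < ∞) (hE₂_lt : μ₂ E₂ < ∞)
    {c : ℝ≥0∞} (hc : c ≠ ∞) : GnormENN μ₁ μ₂ ((E₁ ×ˢ E₂).indicator fun _ => c) < ∞ := by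
  have hle : ∀ z, (E₁ ×ˢ E₂).indicator (fun _ => c) z ≤ c := fun z =>
    Set.indicator_le_self' (fun _ _ => zero_le) z
  have hsec₁ : ∀ b a, (E₁ ×ˢ E₂).indicator (fun _ => c) (a, b) ≤ E₁.indicator (fun _ => c) a :=
    fun b a => by
      by_cases hab : (a, b) ∈ E₁ ×ˢ E₂
      · simp [Set.indicator_of_mem hab, Set.indicator_of_mem hab.1]
      · simp [Set.indicator_of_notMem hab]
  have hsec₂ : ∀ b, essSup (fun a => (E₁ ×ˢ E₂).indicator (fun _ => c) (a, b)) μ₁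
      ≤ E₂.indicator (fun _ => c) b := by
    intro b
    by_cases hb : b ∈ E₂
    · exact essSup_le_of_ae_le _
        (.of_forall fun a => (hle _).trans_eq (Set.indicator_of_mem hb (fun _ => c)).symm)
    · refine essSup_le_of_ae_le _ (.of_forall fun a => ?_)
      simp [hb]
  refine max_lt (max_lt ?_ ?_) (max_lt ?_ ?_)
  · rw [lintegral_indicator_const (hE₁.prod hE₂), Measure.prod_prod]
    exact ENNReal.mul_lt_top hc.lt_top (ENNReal.mul_lt_top hE₁_lt hE₂_lt)
  · exact (essSup_le_of_ae_le c (.of_forall hle)).trans_lt hc.lt_top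
  · refine (essSup_le_of_ae_le (c * μ₁ E₁) (.of_forall fun b => ?_)).trans_lt
      (ENNReal.mul_lt_top hc.lt_top hE₁_lt)
    exact (lintegral_mono (hsec₁ b)).trans (lintegral_indicator_const hE₁ c).le
  · refine ((lintegral_mono hsec₂).trans (lintegral_indicator_const hE₂ c).le).trans_lt ?_
    exact ENNReal.mul_lt_top hc.lt_top hE₂_lt

theorem isFunctionNorm_gnormENN_ofReal_mul [SFinite μ₁] {v : α × β → ℝ} (hv : Measurable v)
    (hv_pos : ∀ x, 0 < v x) :
    IsFunctionNorm (μ₁.prod μ₂) fun F => GnormENN μ₁ μ₂ fun x => ENNReal.ofReal (v x) * F x where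
  mono _ _ h := gnormENN_mono fun x => mul_le_mul_right (h x) _
  const_mul_le c F hc := by
    simp only [mul_left_comm _ c]
    exact gnormENN_const_mul_le _ hc
  tsum_le F hF := by
    simp only [← ENNReal.tsum_mul_left]
    exact gnormENN_tsum_le fun n => (ENNReal.measurable_ofReal.comp hv).mul (hF n)
  ae_lt_top F hF hFG := by
    filter_upwards [ae_lt_top_of_gnormENN_lt_top
      ((ENNReal.measurable_ofReal.comp hv).mul hF) hFG] with x hx
    refine lt_top_iff_ne_top.2 fun hFx => hx.ne ?_
    simp [hFx, hv_pos x]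

end GnormENN

section NormA

variable {U V : Type*} [MeasurableSpace U] [MeasurableSpace V] {lam : Measure U} {kap : Measure V}

theorem normA_mono {K L : U × V → ℝ≥0∞} (h : ∀ t, K t ≤ L t) :
    normA lam kap K ≤ normA lam kap L :=
  max_le_max (essSup_mono_ae (.of_forall fun u => lintegral_mono fun v => h _))
    (essSup_mono_ae (.of_forall fun v => lintegral_mono fun u => h _))

theorem normA_add_le {K L : U × V → ℝ≥0∞} (hK : Measurable K) :
    normA lam kap (fun t => K t + L t) ≤ normA lam kap K + normA lam kap L := by
  have hsec₁ : ∀ u, ∫⁻ v, K (u, v) + L (u, v) ∂kap = ∫⁻ v, K (u, v) ∂kap + ∫⁻ v, L (u, v) ∂kap :=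
    fun u => lintegral_add_left (hK.comp measurable_prodMk_left) _
  have hsec₂ : ∀ v, ∫⁻ u, K (u, v) + L (u, v) ∂lam = ∫⁻ u, K (u, v) ∂lam + ∫⁻ u, L (u, v) ∂lam :=
    fun v => lintegral_add_left (hK.comp measurable_prodMk_right) _
  simp only [normA, hsec₁, hsec₂]
  refine max_le ?_ ?_
  · exact (ENNReal.essSup_add_le _ _).trans (add_le_add (le_max_left _ _) (le_max_left _ _))
  · exact (ENNReal.essSup_add_le _ _).trans (add_le_add (le_max_right _ _) (le_max_right _ _))

theorem normA_tensor {a : U → ℝ≥0∞} {b : V → ℝ≥0∞} (ha : Measurable a) (hb : Measurable b) :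
    normA lam kap (fun t => a t.1 * b t.2)
      = max (essSup a lam * ∫⁻ v, b v ∂kap) ((∫⁻ u, a u ∂lam) * essSup b kap) := by
  simp only [normA, lintegral_const_mul _ hb, lintegral_mul_const _ ha, ENNReal.essSup_const_mul]
  simp_rw [mul_comm _ (∫⁻ v, b v ∂kap), ENNReal.essSup_const_mul]

end NormA

section NormB

variable {X₁ X₂ Y₁ Y₂ : Type*} [MeasurableSpace X₁] [MeasurableSpace X₂]
  [MeasurableSpace Y₁] [MeasurableSpace Y₂]
  {μ₁ : Measure X₁} {μ₂ : Measure X₂} {ν₁ : Measure Y₁} {ν₂ : Measure Y₂}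

theorem normB_mono {K L : (X₁ × X₂) × (Y₁ × Y₂) → ℝ≥0∞} (h : ∀ z, K z ≤ L z) :
    normB μ₁ μ₂ ν₁ ν₂ K ≤ normB μ₁ μ₂ ν₁ ν₂ L :=
  normA_mono fun _ => normA_mono fun _ => h _

theorem normB_tensor_le [SFinite μ₁] [SFinite μ₂] [SFinite ν₁] [SFinite ν₂]
    {P : X₁ × X₂ → ℝ≥0∞} {Q : Y₁ × Y₂ → ℝ≥0∞} (hP : Measurable P) (hQ : Measurable Q) :
    normB μ₁ μ₂ ν₁ ν₂ (fun z => P z.1 * Q z.2)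
      ≤ 2 * (GnormENN μ₁ μ₂ P * GnormENN ν₁ ν₂ Q) := by
  set pI : X₂ → ℝ≥0∞ := fun x₂ => essSup (fun x₁ => P (x₁, x₂)) μ₁
  set p1 : X₂ → ℝ≥0∞ := fun x₂ => ∫⁻ x₁, P (x₁, x₂) ∂μ₁
  set qI : Y₂ → ℝ≥0∞ := fun y₂ => essSup (fun y₁ => Q (y₁, y₂)) ν₁
  set q1 : Y₂ → ℝ≥0∞ := fun y₂ => ∫⁻ y₁, Q (y₁, y₂) ∂ν₁
  have hinner : ∀ s : X₂ × Y₂, normA μ₁ ν₁ (fun t => P (t.1, s.1) * Q (t.2, s.2))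
      ≤ pI s.1 * q1 s.2 + p1 s.1 * qI s.2 := fun s => by
    rw [normA_tensor (a := fun x₁ => P (x₁, s.1)) (b := fun y₁ => Q (y₁, s.2))
      (hP.comp measurable_prodMk_right) (hQ.comp measurable_prodMk_right)]
    exact max_le le_self_add le_add_self
  have hpI : Measurable pI := hP.essSup_prod_left μ₁
  have hq1 : Measurable q1 := hQ.lintegral_prod_left'
  calc normB μ₁ μ₂ ν₁ ν₂ (fun z => P z.1 * Q z.2)
      ≤ normA μ₂ ν₂ (fun s => pI s.1 * q1 s.2 + p1 s.1 * qI s.2) := normA_mono hinner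
    _ ≤ normA μ₂ ν₂ (fun s => pI s.1 * q1 s.2) + normA μ₂ ν₂ (fun s => p1 s.1 * qI s.2) :=
      normA_add_le ((hpI.comp measurable_fst).mul (hq1.comp measurable_snd))
    _ = max (essSup pI μ₂ * ∫⁻ y₂, q1 y₂ ∂ν₂) ((∫⁻ x₂, pI x₂ ∂μ₂) * essSup q1 ν₂)
        + max (essSup p1 μ₂ * ∫⁻ y₂, qI y₂ ∂ν₂) ((∫⁻ x₂, p1 x₂ ∂μ₂) * essSup qI ν₂) := by
      rw [normA_tensor hpI hq1, normA_tensor hP.lintegral_prod_left' (hQ.essSup_prod_left ν₁)]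
    _ ≤ GnormENN μ₁ μ₂ P * GnormENN ν₁ ν₂ Q + GnormENN μ₁ μ₂ P * GnormENN ν₁ ν₂ Q := by
      gcongr <;> refine max_le (mul_le_mul' ?_ ?_) (mul_le_mul' ?_ ?_)
      exacts [essSup_essSup_le_gnormENN hP, lintegral_lintegral_le_gnormENN hQ,
        lintegral_essSup_le_gnormENN P, essSup_lintegral_le_gnormENN Q,
        essSup_lintegral_le_gnormENN P, lintegral_essSup_le_gnormENN Q,
        lintegral_lintegral_le_gnormENN hP, essSup_essSup_le_gnormENN hQ]
    _ = 2 * (GnormENN μ₁ μ₂ P * GnormENN ν₁ ν₂ Q) := (two_mul _).symm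

theorem normBm_tensor_lt_top [SFinite μ₁] [SFinite μ₂] [SFinite ν₁] [SFinite ν₂]
    {m : (X₁ × X₂) × (Y₁ × Y₂) → ℝ} {v : X₁ × X₂ → ℝ} {w : Y₁ × Y₂ → ℝ} {C : ℝ}
    (hC : 0 ≤ C) (hv_nonneg : ∀ x, 0 ≤ v x) (hm_le : ∀ x y, m (x, y) ≤ C * v x * w y)
    {f : X₁ × X₂ → ℂ} {k : Y₁ × Y₂ → ℂ} (hv : Measurable v) (hw : Measurable w)
    (hf : Measurable f) (hk : Measurable k)
    (hfG : GnormENN μ₁ μ₂ (fun x => ENNReal.ofReal (v x) * ‖f x‖ₑ) < ∞)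
    (hkG : GnormENN ν₁ ν₂ (fun y => ENNReal.ofReal (w y) * ‖k y‖ₑ) < ∞) :
    normBm μ₁ μ₂ ν₁ ν₂ m (fun z => f z.1 * k z.2) < ∞ := by
  set P : X₁ × X₂ → ℝ≥0∞ := fun x => ENNReal.ofReal C * (ENNReal.ofReal (v x) * ‖f x‖ₑ)
  set Q : Y₁ × Y₂ → ℝ≥0∞ := fun y => ENNReal.ofReal (w y) * ‖k y‖ₑ
  have hpoint : ∀ z, ENNReal.ofReal (m z) * ‖f z.1 * k z.2‖ₑ ≤ P z.1 * Q z.2 := by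
    rintro ⟨x, y⟩
    calc ENNReal.ofReal (m (x, y)) * ‖f x * k y‖ₑ
        ≤ ENNReal.ofReal (C * v x * w y) * (‖f x‖ₑ * ‖k y‖ₑ) := by
          rw [enorm_mul]; gcongr; exact hm_le x y
      _ = P x * Q y := by
          rw [ENNReal.ofReal_mul (mul_nonneg hC (hv_nonneg x)), ENNReal.ofReal_mul hC]; ring
  have hPG : GnormENN μ₁ μ₂ P < ∞ :=
    (gnormENN_const_mul_le _ ENNReal.ofReal_ne_top).trans_lt (ENNReal.mul_lt_top ofReal_lt_top hfG)
  calc normBm μ₁ μ₂ ν₁ ν₂ m (fun z => f z.1 * k z.2)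
      ≤ normB μ₁ μ₂ ν₁ ν₂ (fun z => P z.1 * Q z.2) :=
        normB_mono (K := fun z => ENNReal.ofReal (m z) * ‖f z.1 * k z.2‖ₑ) hpoint
    _ ≤ 2 * (GnormENN μ₁ μ₂ P * GnormENN ν₁ ν₂ Q) :=
      normB_tensor_le (measurable_const.mul ((ENNReal.measurable_ofReal.comp hv).mul hf.enorm))
        ((ENNReal.measurable_ofReal.comp hw).mul hk.enorm)
    _ < ∞ := ENNReal.mul_lt_top ofNat_lt_top (ENNReal.mul_lt_top hPG hkG)

end NormB

theorem exists_indicator_not_ae_eq_zero {α M : Type*} [MeasurableSpace α] [Zero M]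
    {μ : Measure α} {S : ℕ → Set α} (hS : ∀ x, ∃ n, x ∈ S n) {f : α → M}
    (hf : ¬ f =ᵐ[μ] 0) : ∃ n, ¬ (S n).indicator f =ᵐ[μ] 0 := by
  by_contra! h
  refine hf ?_
  filter_upwards [ae_all_iff.2 h] with x hx
  obtain ⟨n, hn⟩ := hS x
  simpa [Set.indicator_of_mem hn] using hx n

theorem exists_integral_mul_conj_mul_eq_one {α : Type*} [MeasurableSpace α] {μ : Measure α}
    {g : α → ℂ} (hg : MemLp g 2 μ) (hg0 : ¬ g =ᵐ[μ] 0) :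
    ∃ c : ℂ, ∫ y, c * starRingEnd ℂ (g y) * g y ∂μ = 1 := by
  have hint : Integrable (fun y => ‖g y‖ ^ 2) μ :=
    (memLp_two_iff_integrable_sq_norm hg.1).1 hg
  have hpos : ∫ y, ‖g y‖ ^ 2 ∂μ ≠ 0 := fun h0 => hg0 <| by
    filter_upwards [(integral_eq_zero_iff_of_nonneg (fun y => sq_nonneg _) hint).1 h0] with y hy
    simpa using hy
  refine ⟨((∫ y, ‖g y‖ ^ 2 ∂μ)⁻¹ : ℝ), ?_⟩
  have hconj : ∀ y, starRingEnd ℂ (g y) * g y = ((‖g y‖ ^ 2 : ℝ) : ℂ) := fun y => by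
    rw [mul_comm, Complex.mul_conj', Complex.ofReal_pow]
  simp_rw [mul_assoc, hconj]
  rw [integral_const_mul, integral_complex_ofReal, ← Complex.ofReal_mul, inv_mul_cancel₀ hpos,
    Complex.ofReal_one]

namespace SolidBanachFunctionSpace

theorem exists_memLp_two_gnormENN_lt_top {α β : Type*} [MeasurableSpace α] [MeasurableSpace β]
    {μ₁ : Measure α} {μ₂ : Measure β} [SigmaFinite μ₁] [SigmaFinite μ₂]
    (A : SolidBanachFunctionSpace (α × β) (μ₁.prod μ₂))
    (hA : ∃ f, A.Mem f ∧ ¬ f =ᵐ[μ₁.prod μ₂] 0) {w : α × β → ℝ} (hw : Measurable w) :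
    ∃ g, A.Mem g ∧ ¬ g =ᵐ[μ₁.prod μ₂] 0 ∧ MemLp g 2 (μ₁.prod μ₂) ∧
      GnormENN μ₁ μ₂ (fun y => ENNReal.ofReal (w y) * ‖g y‖ₑ) < ∞ := by
  obtain ⟨f, hfA, hf0⟩ := hA
  have hf := A.mem_measurable f hfA
  set R : ℕ → Set (α × β) := fun n => spanningSets μ₁ n ×ˢ spanningSets μ₂ n
  have hR : ∀ n, MeasurableSet (R n) := fun n =>
    (measurableSet_spanningSets μ₁ n).prod (measurableSet_spanningSets μ₂ n)
  set S : ℕ → Set (α × β) := fun n => R n ∩ {y | ‖f y‖ ≤ n ∧ w y ≤ n}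
  have hS : ∀ y, ∃ n, y ∈ S n := fun y =>
    ((((eventually_mem_spanningSets μ₁ y.1).and (eventually_mem_spanningSets μ₂ y.2)).and
      ((tendsto_natCast_atTop_atTop.eventually_ge_atTop ‖f y‖).and
        (tendsto_natCast_atTop_atTop.eventually_ge_atTop (w y)))).exists)
  obtain ⟨n, hn⟩ := exists_indicator_not_ae_eq_zero hS hf0
  have hSn : MeasurableSet (S n) :=
    (hR n).inter ((measurableSet_le hf.norm measurable_const).inter
      (measurableSet_le hw measurable_const))
  set g := (S n).indicator f
  have hg : Measurable g := hf.indicator hSn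
  have hbound : ∀ y, ‖g y‖ ≤ (R n).indicator (fun _ => (n : ℝ)) y ∧
      ENNReal.ofReal (w y) * ‖g y‖ₑ
        ≤ (R n).indicator (fun _ => ENNReal.ofReal n * ENNReal.ofReal n) y := fun y => by
    by_cases hy : y ∈ S n
    · rw [Set.indicator_of_mem hy.1, Set.indicator_of_mem hy.1, show g y = f y from
        Set.indicator_of_mem hy f, ← ofReal_norm]
      exact ⟨hy.2.1, mul_le_mul' (ENNReal.ofReal_le_ofReal hy.2.2)
        (ENNReal.ofReal_le_ofReal hy.2.1)⟩
    · simp only [g, Set.indicator_of_notMem hy, norm_zero, enorm_zero, mul_zero, zero_le,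
        and_true]
      exact Set.indicator_nonneg (fun _ _ => n.cast_nonneg) y
  refine ⟨g, (A.solid f g hfA hg (.of_forall fun y => norm_indicator_le_norm_self f y)).1, hn,
    ?_, ?_⟩
  · refine (memLp_indicator_const 2 (hR n) (n : ℝ)
      (Or.inr (by simp [R, Measure.prod_prod, ENNReal.mul_eq_top,
        (measure_spanningSets_lt_top _ _).ne]))).of_le hg.aestronglyMeasurable
      (.of_forall fun y => (hbound y).1.trans (Real.le_norm_self _))
  · exact (gnormENN_mono fun y => (hbound y).2).trans_lt
      (gnormENN_indicator_prod_lt_top (measurableSet_spanningSets μ₁ n)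
        (measurableSet_spanningSets μ₂ n) (measure_spanningSets_lt_top μ₁ n)
        (measure_spanningSets_lt_top μ₂ n) (by finiteness))

variable {α : Type*} [MeasurableSpace α] {μ : Measure α} {N : (α → ℝ≥0∞) → ℝ≥0∞}

theorem exists_norm_le_of_tsum_lt_top (B : SolidBanachFunctionSpace α μ)
    (hN : IsFunctionNorm μ N)
    (hB : ∀ f : α → ℂ, Measurable f → N (fun x => ‖f x‖ₑ) < ∞ → B.Mem f)
    {h : ℕ → α → ℂ} (hh : ∀ k, Measurable (h k))
    (hsum : ∑' k, N (fun x => ‖h k x‖ₑ) < ∞) : ∃ b : ℝ, ∀ k, B.norm (h k) ≤ b := by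
  set U : α → ℝ≥0∞ := fun x => ∑' k, ‖h k x‖ₑ
  have hU : Measurable U := Measurable.tsum fun k => (hh k).enorm
  have hNU : N U < ∞ := (hN.tsum_le _ fun k => (hh k).enorm).trans_lt hsum
  set H : α → ℂ := fun x => ((U x).toReal : ℂ)
  have hHU : ∀ x, ‖H x‖ₑ ≤ U x := fun x => by
    rw [Complex.enorm_ofReal_of_nonneg ENNReal.toReal_nonneg]
    exact ENNReal.ofReal_toReal_le
  have hHB : B.Mem H :=
    hB H (Complex.measurable_ofReal.comp hU.ennreal_toReal) ((hN.mono hHU).trans_lt hNU)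
  refine ⟨B.norm H, fun k => (B.solid H (h k) hHB (hh k) ?_).2⟩
  filter_upwards [hN.ae_lt_top U hU hNU] with x hx
  refine enorm_le_iff_norm_le.1 ?_
  rw [Complex.enorm_ofReal_of_nonneg ENNReal.toReal_nonneg, ENNReal.ofReal_toReal hx.ne]
  exact ENNReal.le_tsum (f := fun k => ‖h k x‖ₑ) k

theorem exists_norm_le_of_forall_mem (B : SolidBanachFunctionSpace α μ)
    (hN : IsFunctionNorm μ N)
    (hB : ∀ f : α → ℂ, Measurable f → N (fun x => ‖f x‖ₑ) < ∞ → B.Mem f) :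
    ∃ C : ℝ, 0 < C ∧ ∀ f : α → ℂ, Measurable f → N (fun x => ‖f x‖ₑ) < ∞ →
      B.norm f ≤ C * (N fun x => ‖f x‖ₑ).toReal := by
  by_contra! hcon
  choose f hf hf_fin hf_big using fun k : ℕ => hcon (2 ^ k * (k + 1)) (by positivity)
  set n : ℕ → ℝ := fun k => (N fun x => ‖f k x‖ₑ).toReal
  have hf_pos : ∀ k, 0 < B.norm (f k) := fun k =>
    lt_of_le_of_lt (by positivity) (hf_big k)
  have hc_nonneg : ∀ k : ℕ, 0 ≤ (k + 1) / B.norm (f k) := fun k =>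
    (div_pos (by positivity) (hf_pos k)).le
  set h : ℕ → α → ℂ := fun k => (((k + 1) / B.norm (f k) : ℝ) : ℂ) • f k
  have hh_norm : ∀ k, B.norm (h k) = k + 1 := fun k => by
    rw [B.norm_smul' _ _ (hB _ (hf k) (hf_fin k)), Complex.norm_real,
      Real.norm_of_nonneg (hc_nonneg k), div_mul_cancel₀ _ (hf_pos k).ne']
  have hh_N : ∀ k, N (fun x => ‖h k x‖ₑ) ≤ ENNReal.ofReal ((1 / 2) ^ k) := fun k => by
    have hsmall : (k + 1) / B.norm (f k) * n k ≤ (1 / 2) ^ k := by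
      rw [div_mul_eq_mul_div, div_le_iff₀ (hf_pos k), one_div_pow, one_div_mul_eq_div,
        le_div_iff₀ (by positivity)]
      linarith [hf_big k]
    calc N (fun x => ‖h k x‖ₑ)
        = N (fun x => ENNReal.ofReal ((k + 1) / B.norm (f k)) * ‖f k x‖ₑ) := by
          simp only [h, Pi.smul_apply, smul_eq_mul, enorm_mul,
            Complex.enorm_ofReal_of_nonneg (hc_nonneg k)]
      _ ≤ ENNReal.ofReal ((k + 1) / B.norm (f k)) * N (fun x => ‖f k x‖ₑ) :=
          hN.const_mul_le _ _ ENNReal.ofReal_ne_top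
      _ = ENNReal.ofReal ((k + 1) / B.norm (f k) * n k) := by
          rw [ENNReal.ofReal_mul (hc_nonneg k), ENNReal.ofReal_toReal (hf_fin k).ne]
      _ ≤ ENNReal.ofReal ((1 / 2) ^ k) := ENNReal.ofReal_le_ofReal hsmall
  have hsum : ∑' k, N (fun x => ‖h k x‖ₑ) < ∞ := by
    refine (ENNReal.tsum_le_tsum hh_N).trans_lt ?_
    rw [← ENNReal.ofReal_tsum_of_nonneg (fun k => by positivity) summable_geometric_two]
    exact ENNReal.ofReal_lt_top
  obtain ⟨b, hb⟩ := B.exists_norm_le_of_tsum_lt_top (h := h) hN hB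
    (fun k => measurable_const.smul (hf k)) hsum
  obtain ⟨k, hk⟩ := exists_nat_gt b
  linarith [hb k, hh_norm k]

end SolidBanachFunctionSpace

theorem compatible_space_contains_Gv_general
    {X₁ X₂ Y₁ Y₂ : Type*} [MeasurableSpace X₁] [MeasurableSpace X₂]
    [MeasurableSpace Y₁] [MeasurableSpace Y₂]
    (μ₁ : Measure X₁) (μ₂ : Measure X₂) (ν₁ : Measure Y₁) (ν₂ : Measure Y₂)
    [SigmaFinite μ₁] [SigmaFinite μ₂] [SigmaFinite ν₁] [SigmaFinite ν₂]
    (m : (X₁ × X₂) × (Y₁ × Y₂) → ℝ)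
    (A : SolidBanachFunctionSpace (Y₁ × Y₂) (ν₁.prod ν₂))
    (B : SolidBanachFunctionSpace (X₁ × X₂) (μ₁.prod μ₂))
    (v : X₁ × X₂ → ℝ) (w : Y₁ × Y₂ → ℝ) (hv : Measurable v) (hw : Measurable w)
    (hv_pos : ∀ x, 0 < v x)
    (C : ℝ) (hC : 0 < C)
    (hm_le : ∀ (x : X₁ × X₂) (y : Y₁ × Y₂), m (x, y) ≤ C * v x * w y)
    (hA_ne : ∃ f, A.Mem f ∧ ¬ f =ᵐ[ν₁.prod ν₂] 0)
    (hop : ∀ K : (X₁ × X₂) × (Y₁ × Y₂) → ℂ, Measurable K →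
      normBm μ₁ μ₂ ν₁ ν₂ m K < ∞ → ∀ f, A.Mem f →
        (∀ᵐ x ∂(μ₁.prod μ₂), Integrable (fun y => K (x, y) * f y) (ν₁.prod ν₂)) ∧
        B.Mem (fun x => ∫ y, K (x, y) * f y ∂(ν₁.prod ν₂))) :
    ∃ C' : ℝ, 0 < C' ∧ ∀ f : X₁ × X₂ → ℂ, Measurable f →
      Gnorm μ₁ μ₂ (fun x => (v x : ℂ) * f x) < ∞ →
      B.Mem f ∧ B.norm f ≤ C' * (Gnorm μ₁ μ₂ (fun x => (v x : ℂ) * f x)).toReal := by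
  have hv_nonneg : ∀ x, 0 ≤ v x := fun x => (hv_pos x).le
  obtain ⟨g, hgA, hg0, hg2, hgG⟩ := A.exists_memLp_two_gnormENN_lt_top hA_ne hw
  obtain ⟨c, hc⟩ := exists_integral_mul_conj_mul_eq_one hg2 hg0
  simp only [mul_assoc] at hc
  have hk : Measurable fun y => c * starRingEnd ℂ (g y) :=
    measurable_const.mul (Complex.continuous_conj.measurable.comp (A.mem_measurable g hgA))
  have hkG : GnormENN ν₁ ν₂ (fun y => ENNReal.ofReal (w y) * ‖c * starRingEnd ℂ (g y)‖ₑ) < ∞ := by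
    simp only [enorm_mul, RCLike.enorm_conj, mul_left_comm _ ‖c‖ₑ]
    exact (gnormENN_const_mul_le _ enorm_ne_top).trans_lt (ENNReal.mul_lt_top enorm_lt_top hgG)
  -- `Φ_K g = f` for `K (x, y) = f x * (c * conj (g y))`, since `∫ c * conj g * g = 1`.
  have hB : ∀ f, Measurable f → Gnorm μ₁ μ₂ (fun x => (v x : ℂ) * f x) < ∞ → B.Mem f := by
    intro f hf hfG
    rw [gnorm_ofReal_mul hv_nonneg] at hfG
    have hK := normBm_tensor_lt_top hC.le hv_nonneg hm_le hv hw hf hk hfG hkG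
    have hΦ := (hop (fun z => f z.1 * (c * starRingEnd ℂ (g z.2)))
      ((hf.comp measurable_fst).mul (hk.comp measurable_snd)) hK g hgA).2
    simpa only [mul_assoc, integral_const_mul, hc, mul_one] using hΦ
  obtain ⟨C', hC', hbound⟩ := B.exists_norm_le_of_forall_mem
    (isFunctionNorm_gnormENN_ofReal_mul hv hv_pos)
    fun f hf hfG => hB f hf (by rwa [gnorm_ofReal_mul hv_nonneg])
  refine ⟨C', hC', fun f hf hfG => ⟨hB f hf hfG, ?_⟩⟩
  rw [gnorm_ofReal_mul hv_nonneg] at hfG ⊢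
  exact hbound f hf hfG

/-- Necessary conditions for spaces compatible with `𝓑_m`: the target space contains
`𝒢_v = (L¹ ∩ L^∞ ∩ L^{1,∞} ∩ L^{∞,1})_v`
(Theorem `thm:NecessaryConditionsForCompatibleSpaces` (1)). -/
theorem compatible_space_contains_Gv
    {X₁ X₂ Y₁ Y₂ : Type*} [MeasurableSpace X₁] [MeasurableSpace X₂]
    [MeasurableSpace Y₁] [MeasurableSpace Y₂]
    (μ₁ : Measure X₁) (μ₂ : Measure X₂) (ν₁ : Measure Y₁) (ν₂ : Measure Y₂)
    [SigmaFinite μ₁] [SigmaFinite μ₂] [SigmaFinite ν₁] [SigmaFinite ν₂]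
    (m : (X₁ × X₂) × (Y₁ × Y₂) → ℝ) (hm : Measurable m) (hm_pos : ∀ z, 0 < m z)
    (A : SolidBanachFunctionSpace (Y₁ × Y₂) (ν₁.prod ν₂))
    (B : SolidBanachFunctionSpace (X₁ × X₂) (μ₁.prod μ₂))
    (v : X₁ × X₂ → ℝ) (w : Y₁ × Y₂ → ℝ) (hv : Measurable v) (hw : Measurable w)
    (hv_pos : ∀ x, 0 < v x) (hw_pos : ∀ y, 0 < w y)
    (C : ℝ) (hC : 0 < C)
    (hm_le : ∀ (x : X₁ × X₂) (y : Y₁ × Y₂), m (x, y) ≤ C * v x * w y)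
    (hA_ne : ∃ f, A.Mem f ∧ ¬ f =ᵐ[ν₁.prod ν₂] 0)
    (hop : ∀ K : (X₁ × X₂) × (Y₁ × Y₂) → ℂ, Measurable K →
      normBm μ₁ μ₂ ν₁ ν₂ m K < ∞ → ∀ f, A.Mem f →
        (∀ᵐ x ∂(μ₁.prod μ₂), Integrable (fun y => K (x, y) * f y) (ν₁.prod ν₂)) ∧
        B.Mem (fun x => ∫ y, K (x, y) * f y ∂(ν₁.prod ν₂))) :
    ∃ C' : ℝ, 0 < C' ∧ ∀ f : X₁ × X₂ → ℂ, Measurable f →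
      Gnorm μ₁ μ₂ (fun x => (v x : ℂ) * f x) < ∞ →
      B.Mem f ∧ B.norm f ≤ C' * (Gnorm μ₁ μ₂ (fun x => (v x : ℂ) * f x)).toReal :=
  compatible_space_contains_Gv_general μ₁ μ₂ ν₁ ν₂ m A B v w hv hw hv_pos C hC hm_le hA_ne hop

end
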